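/- arXiv:2410.05980 — 3 statements merged into one kernel-verified Lean document; each statement's English description precedes it below -/
import Mathlib

section
/- Under the zero-one loss, for any α ∈ (r_exp(f; u), 1), the distributionally diverse risk satisfies r_dd(f; γ) ≤ (γ − log((1−α)/(1−r_exp(f; u)))) / (log(α/(1−α)) + log(1/r_exp(f; u) − 1)). -/
open MeasureTheory Real Set Classical

/-! The Gibbs variational inequality `∫ q g + H(q) ≤ log ∫ exp g`, applied to `g = λ ℓ` with `ℓ`
the zero-one loss and `λ > 0`, bounds the `q`-risk by `(log ∫ exp (λ ℓ) - H(q)) / λ`. Since `ℓ`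
takes values in `{0, 1}`, `∫ exp (λ ℓ) dμ = μ(X) ((1 - r) + r e^λ)` with `r` the uniform risk,
so the risk is at most `(γ + log ((1 - r) + r e^λ)) / λ`. Choosing `λ = logit α - logit r`, the
point where the tangent to `λ ↦ log ((1 - r) + r e^λ)` has slope `α`, gives
`(1 - r) + r e^λ = (1 - r) / (1 - α)`. -/

lemma Real.mul_log_div_le_sub {a b : ℝ} (ha : 0 ≤ a) (hb : 0 < b) :
    a * log (b / a) ≤ b - a := by
  rcases ha.eq_or_lt with rfl | ha
  · simpa using hb.le
  · calc a * log (b / a) ≤ a * (b / a - 1) :=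
          mul_le_mul_of_nonneg_left (log_le_sub_one_of_pos (by positivity)) ha.le
      _ = b - a := by field_simp

lemma Real.exp_mul_of_eq_zero_or_eq_one (t : ℝ) {y : ℝ} (hy : y = 0 ∨ y = 1) :
    exp (t * y) = 1 + (exp t - 1) * y := by
  rcases hy with rfl | rfl <;> simp

section Integrals

variable {X : Type*} [MeasurableSpace X] {μ : Measure X}

theorem integral_mul_add_entropy_le_log_integral_exp {q g : X → ℝ} (hq0 : ∀ x, 0 ≤ q x)
    (hq1 : ∫ x, q x ∂μ = 1) (hqg : Integrable (fun x => q x * g x) μ)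
    (hH : Integrable (fun x => q x * log (1 / q x)) μ)
    (hg : Integrable (fun x => exp (g x)) μ) :
    ∫ x, q x * g x ∂μ + ∫ x, q x * log (1 / q x) ∂μ ≤ log (∫ x, exp (g x) ∂μ) := by
  set Z := ∫ x, exp (g x) ∂μ
  have : NeZero μ := ⟨by rintro rfl; simp at hq1⟩
  have hZ : 0 < Z := integral_exp_pos hg
  have hq : Integrable q μ := Integrable.of_integral_ne_zero (by simp [hq1])
  -- `mul_log_div_le_sub` at `b = exp g / Z`; the right side integrates to `log Z`
  have hpt : ∀ x, q x * g x + q x * log (1 / q x) ≤ q x * log Z + exp (g x) / Z - q x := by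
    intro x
    have key := mul_log_div_le_sub (hq0 x) (div_pos (exp_pos (g x)) hZ)
    rcases (hq0 x).eq_or_lt with h0 | hpos
    · rw [← h0] at key ⊢
      simpa using key
    · rw [log_div (by positivity) hpos.ne', log_div (exp_pos _).ne' hZ.ne', log_exp] at key
      rw [one_div, log_inv]
      linarith
  calc ∫ x, q x * g x ∂μ + ∫ x, q x * log (1 / q x) ∂μ
      = ∫ x, (q x * g x + q x * log (1 / q x)) ∂μ := (integral_add hqg hH).symm
    _ ≤ ∫ x, (q x * log Z + exp (g x) / Z - q x) ∂μ :=
        integral_mono (hqg.add hH) (((hq.mul_const _).add (hg.div_const _)).sub hq) hpt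
    _ = log Z := by
        rw [integral_sub (f := fun x => q x * log Z + exp (g x) / Z)
            ((hq.mul_const _).add (hg.div_const _)) hq,
          integral_add (hq.mul_const _) (hg.div_const _), integral_mul_const, integral_div, hq1]
        field_simp
        ring

lemma integral_exp_mul_of_eq_zero_or_eq_one [IsFiniteMeasure μ] {ℓ : X → ℝ} (hℓ : ∀ x, ℓ x = 0 ∨ ℓ x = 1) (hint : Integrable ℓ μ)
    (t : ℝ) :
    Integrable (fun x => exp (t * ℓ x)) μ ∧
      ∫ x, exp (t * ℓ x) ∂μ = μ.real univ + (exp t - 1) * ∫ x, ℓ x ∂μ := by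
  have hexp : (fun x => exp (t * ℓ x)) = fun x => 1 + (exp t - 1) * ℓ x :=
    funext fun x => exp_mul_of_eq_zero_or_eq_one t (hℓ x)
  rw [hexp]
  refine ⟨(integrable_const 1).add (hint.const_mul _), ?_⟩
  rw [integral_add (integrable_const 1) (hint.const_mul _), integral_const, integral_const_mul,
    smul_eq_mul, mul_one]

end Integrals

noncomputable def tangentSlope (r α : ℝ) : ℝ := log (α / (1 - α)) + log (1 / r - 1)

section TangentSlope

variable {r α : ℝ}

lemma exp_tangentSlope (hr : 0 < r) (hr1 : r < 1) (hα : 0 < α) (hα1 : α < 1) :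
    exp (tangentSlope r α) = α * (1 - r) / ((1 - α) * r) := by
  have h1r : 0 < 1 / r - 1 := by rw [one_div, sub_pos]; exact one_lt_inv₀ hr |>.mpr hr1
  rw [tangentSlope, exp_add, exp_log (div_pos hα (by linarith)), exp_log h1r]
  field_simp

lemma tangentSlope_pos (hr : 0 < r) (hrα : r < α) (hα1 : α < 1) : 0 < tangentSlope r α := by
  rw [← exp_lt_exp, exp_zero, exp_tangentSlope hr (hrα.trans hα1) (hr.trans hrα) hα1,
    one_lt_div (mul_pos (by linarith) hr)]
  nlinarith

lemma one_sub_add_mul_exp_tangentSlope (hr : 0 < r) (hrα : r < α) (hα1 : α < 1) :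
    1 - r + r * exp (tangentSlope r α) = (1 - r) / (1 - α) := by
  rw [exp_tangentSlope hr (hrα.trans hα1) (hr.trans hrα) hα1]
  have : 1 - α ≠ 0 := by linarith
  field_simp
  ring

end TangentSlope

theorem dd_risk_tangent_bound_general
    {X Y : Type*} [MeasurableSpace X] (μ : Measure X) [IsFiniteMeasure μ]
    (hμ : 0 < (μ univ).toReal)
    (f fstar : X → Y) (γ : ℝ) (α : ℝ)
    (ru : ℝ)
    (hru : ru = ∫ x, (1 / (μ univ).toReal) * (if f x = fstar x then (0:ℝ) else 1) ∂μ)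
    (hru0 : 0 < ru)
    (hα : α ∈ Ioo ru 1)
    (q : X → ℝ) (hq0 : ∀ x, 0 ≤ q x)
    (hq1 : ∫ x, q x ∂μ = 1)
    (hqint : Integrable (fun x => q x * log (1 / q x)) μ)
    (hqrisk : Integrable (fun x => q x * (if f x = fstar x then (0:ℝ) else 1)) μ)
    (hent : log (μ univ).toReal - γ ≤ ∫ x, q x * log (1 / q x) ∂μ) :
    (∫ x, q x * (if f x = fstar x then (0:ℝ) else 1) ∂μ)
      ≤ (γ - log ((1 - α) / (1 - ru)))
          / (log (α / (1 - α)) + log (1 / ru - 1)) := by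
  set M := (μ univ).toReal
  set ℓ : X → ℝ := fun x => if f x = fstar x then 0 else 1
  set lam := tangentSlope ru α
  have hℓ01 : ∀ x, ℓ x = 0 ∨ ℓ x = 1 := fun x => by by_cases h : f x = fstar x <;> simp [ℓ, h]
  have hℓ : ∫ x, ℓ x ∂μ = M * ru := by
    rw [hru, integral_const_mul]
    field_simp
    rfl
  have hℓint : Integrable ℓ μ := Integrable.of_integral_ne_zero (by rw [hℓ]; positivity)
  obtain ⟨hexp_int, hexp⟩ := integral_exp_mul_of_eq_zero_or_eq_one hℓ01 hℓint lam
  have hZ : ∫ x, exp (lam * ℓ x) ∂μ = M * ((1 - ru) / (1 - α)) := by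
    rw [hexp, hℓ, measureReal_def, ← one_sub_add_mul_exp_tangentSlope hru0 hα.1 hα.2]
    ring
  have hgibbs := integral_mul_add_entropy_le_log_integral_exp (g := fun x => lam * ℓ x) hq0 hq1
    (by simpa only [mul_left_comm] using hqrisk.const_mul lam) hqint hexp_int
  simp only [mul_left_comm _ lam, integral_const_mul, hZ] at hgibbs
  rw [log_mul hμ.ne' (div_pos (by linarith [hα.1, hα.2]) (by linarith [hα.2])).ne',
    ← inv_div, log_inv] at hgibbs
  show ∫ x, q x * ℓ x ∂μ ≤ _ / lam
  rw [le_div_iff₀' (tangentSlope_pos hru0 hα.1 hα.2)]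
  linarith

/-- Under the zero-one loss, for any `α ∈ (r_exp(f;u), 1)`, the distributionally
diverse risk satisfies
`r_dd(f;γ) ≤ (γ − log((1−α)/(1−r_u))) / (log(α/(1−α)) + log(1/r_u − 1))`,
where `r_u = r_exp(f; u)` is the uniform expected risk. -/
theorem dd_risk_tangent_bound
    {X Y : Type*} [MeasurableSpace X] (μ : Measure X) [IsFiniteMeasure μ]
    (hμ : 0 < (μ univ).toReal)
    (f fstar : X → Y) (γ : ℝ) (hγ : 0 ≤ γ) (α : ℝ)
    (ru : ℝ)
    (hru : ru = ∫ x, (1 / (μ univ).toReal) * (if f x = fstar x then (0:ℝ) else 1) ∂μ)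
    (hru0 : 0 < ru) (hru2 : ru < 1 / 2)
    (hα : α ∈ Ioo ru 1)
    (q : X → ℝ) (hq : Measurable q) (hq0 : ∀ x, 0 ≤ q x)
    (hq1 : ∫ x, q x ∂μ = 1)
    (hqint : Integrable (fun x => q x * log (1 / q x)) μ)
    (hqrisk : Integrable (fun x => q x * (if f x = fstar x then (0:ℝ) else 1)) μ)
    (hent : log (μ univ).toReal - γ ≤ ∫ x, q x * log (1 / q x) ∂μ) :
    (∫ x, q x * (if f x = fstar x then (0:ℝ) else 1) ∂μ)
      ≤ (γ - log ((1 - α) / (1 - ru)))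
          / (log (α / (1 - α)) + log (1 / ru - 1)) :=
  dd_risk_tangent_bound_general μ hμ f fstar γ α ru hru hru0 hα q hq0 hq1 hqint hqrisk hent
end

section
/- Under the zero-one loss, the distributionally diverse risk satisfies the simplified bound r_dd(f; γ) ≤ (γ + log 2) / (−log r_exp(f; u)), provided r_exp(f; u) ∈ (0,1). In particular r_dd(f; γ) → 0 as r_exp(f; u) → 0 for any fixed γ. -/
/-!
Write `B` for the error set `{f ≠ f*}` and `M = μ X`, so that `μ B = r_exp · M`. Gibbs'
inequality against the density spreading mass `1/2` uniformly over `B` and `1/2` uniformly over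
its complement gives `H(q) ≤ log (2M) + q(B) · log r_exp`. Together with `H(q) ≥ log M - γ`
this is `q(B) · (-log r_exp) ≤ γ + log 2`.
-/

open MeasureTheory Real Set Classical

lemma mul_log_one_div_le {q w : ℝ} (hq : 0 ≤ q) (hw : 0 < w) :
    q * log (1 / q) ≤ q * log (1 / w) + (w - q) := by
  rcases hq.eq_or_lt with rfl | hq
  · simpa using hw.le
  have h := mul_le_mul_of_nonneg_left (log_le_sub_one_of_pos (div_pos hw hq)) hq.le
  rw [log_div hw.ne' hq.ne', mul_sub_one, mul_div_cancel₀ _ hq.ne'] at h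
  simp only [one_div, log_inv]
  linarith

section Gibbs

variable {X : Type*} [MeasurableSpace X] {μ : Measure X} {q w : X → ℝ}

theorem integral_mul_log_one_div_le (hq0 : ∀ x, 0 ≤ q x) (hw : ∀ x, 0 < w x)
    (hq : Integrable q μ) (hwint : Integrable w μ)
    (hqq : Integrable (fun x ↦ q x * log (1 / q x)) μ)
    (hqw : Integrable (fun x ↦ q x * log (1 / w x)) μ) :
    ∫ x, q x * log (1 / q x) ∂μ ≤
      ∫ x, q x * log (1 / w x) ∂μ + (∫ x, w x ∂μ - ∫ x, q x ∂μ) := by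
  have hwq : Integrable (fun x ↦ w x - q x) μ := hwint.sub hq
  rw [← integral_sub hwint hq, ← integral_add hqw hwq]
  exact integral_mono hqq (hqw.add hwq) fun x ↦ mul_log_one_div_le (hq0 x) (hw x)

theorem integral_mul_log_one_div_le_of_zero_one [IsFiniteMeasure μ] {g : X → ℝ}
    (hg : ∀ x, g x = 0 ∨ g x = 1) (hgint : Integrable g μ)
    (ha : 0 < ∫ x, g x ∂μ) (haM : ∫ x, g x ∂μ < μ.real univ)
    (hq0 : ∀ x, 0 ≤ q x) (hq1 : ∫ x, q x ∂μ = 1)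
    (hqq : Integrable (fun x ↦ q x * log (1 / q x)) μ)
    (hqg : Integrable (fun x ↦ q x * g x) μ) :
    ∫ x, q x * log (1 / q x) ∂μ ≤
      (∫ x, q x * g x ∂μ) * log (2 * ∫ x, g x ∂μ) +
        (1 - ∫ x, q x * g x ∂μ) * log (2 * (μ.real univ - ∫ x, g x ∂μ)) := by
  set a := ∫ x, g x ∂μ
  set b := μ.real univ - a
  have hb : 0 < b := sub_pos.2 haM
  have hq : Integrable q μ := .of_integral_ne_zero (by simp [hq1])
  set w : X → ℝ := fun x ↦ g x / (2 * a) + (1 - g x) / (2 * b)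
  have hw : ∀ x, 0 < w x := fun x ↦ by rcases hg x with h | h <;> simp [w, h] <;> positivity
  have hlogw : ∀ x, q x * log (1 / w x) =
      log (2 * a) * (q x * g x) + log (2 * b) * (q x - q x * g x) := fun x ↦ by
    rcases hg x with h | h <;> simp [w, h, mul_comm]
  have hg' : Integrable (fun x ↦ 1 - g x) μ := (integrable_const 1).sub hgint
  have hwint : Integrable w μ := (hgint.div_const _).add (hg'.div_const _)
  have hqg' : Integrable (fun x ↦ q x - q x * g x) μ := hq.sub hqg
  have hqw : Integrable (fun x ↦ q x * log (1 / w x)) μ := by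
    simp_rw [hlogw]
    exact (hqg.const_mul _).add (hqg'.const_mul _)
  have hwI : ∫ x, w x ∂μ = 1 := by
    rw [integral_add (hgint.div_const _) (hg'.div_const _),
      integral_div, integral_div, integral_sub (integrable_const 1) hgint, integral_const]
    simp only [smul_eq_mul, mul_one]
    field_simp
    ring
  have hqwI : ∫ x, q x * log (1 / w x) ∂μ =
      (∫ x, q x * g x ∂μ) * log (2 * a) + (1 - ∫ x, q x * g x ∂μ) * log (2 * b) := by
    simp_rw [hlogw]
    rw [integral_add (hqg.const_mul _) (hqg'.const_mul _), integral_const_mul,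
      integral_const_mul, integral_sub hq hqg, hq1]
    ring
  have := integral_mul_log_one_div_le hq0 hw hq hwint hqq hqw
  rwa [hqwI, hwI, hq1, sub_self, add_zero] at this

theorem integral_mul_log_one_div_le_log_two_mul_add [IsFiniteMeasure μ] {g : X → ℝ}
    (hg : ∀ x, g x = 0 ∨ g x = 1) (hgint : Integrable g μ)
    (ha : 0 < ∫ x, g x ∂μ) (haM : ∫ x, g x ∂μ < μ.real univ)
    (hq0 : ∀ x, 0 ≤ q x) (hq1 : ∫ x, q x ∂μ = 1)
    (hqq : Integrable (fun x ↦ q x * log (1 / q x)) μ)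
    (hqg : Integrable (fun x ↦ q x * g x) μ) :
    ∫ x, q x * log (1 / q x) ∂μ ≤
      log (2 * μ.real univ) + (∫ x, q x * g x ∂μ) * log ((∫ x, g x ∂μ) / μ.real univ) := by
  set a := ∫ x, g x ∂μ
  set M := μ.real univ
  set r := ∫ x, q x * g x ∂μ
  have hM : 0 < M := ha.trans haM
  have hq : Integrable q μ := .of_integral_ne_zero (by simp [hq1])
  have hr1 : r ≤ 1 := hq1 ▸ integral_mono hqg hq fun x ↦ by
    rcases hg x with h | h <;> simp [h, hq0 x]
  have hla : log (2 * a) = log (2 * M) + log (a / M) := by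
    rw [← log_mul (by positivity) (by positivity)]
    field_simp
  have hlb : log (2 * (M - a)) ≤ log (2 * M) := log_le_log (by linarith) (by linarith)
  have := integral_mul_log_one_div_le_of_zero_one hg hgint ha haM hq0 hq1 hqq hqg
  rw [hla] at this
  linarith [mul_le_mul_of_nonneg_left hlb (sub_nonneg.2 hr1)]

end Gibbs

theorem dd_risk_log_bound_general
    {X Y : Type*} [MeasurableSpace X] (μ : Measure X) [IsFiniteMeasure μ]
    (f fstar : X → Y) (γ : ℝ)
    (ru : ℝ)
    (hru : ru = ∫ x, (1 / (μ univ).toReal) * (if f x = fstar x then (0:ℝ) else 1) ∂μ)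
    (hru' : ru ∈ Ioo (0:ℝ) 1)
    (q : X → ℝ) (hq0 : ∀ x, 0 ≤ q x)
    (hq1 : ∫ x, q x ∂μ = 1)
    (hqint : Integrable (fun x => q x * log (1 / q x)) μ)
    (hqrisk : Integrable (fun x => q x * (if f x = fstar x then (0:ℝ) else 1)) μ)
    (hent : log (μ univ).toReal - γ ≤ ∫ x, q x * log (1 / q x) ∂μ) :
    (∫ x, q x * (if f x = fstar x then (0:ℝ) else 1) ∂μ)
      ≤ (γ + log 2) / (-log ru) := by
  obtain ⟨hru0, hru1⟩ := hru'
  set M := μ.real univ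
  set err : X → ℝ := fun x ↦ if f x = fstar x then 0 else 1
  have hru_eq : ru = (∫ x, err x ∂μ) / M := by
    rw [hru, integral_const_mul, one_div_mul_eq_div]; rfl
  have hM : 0 < M := measureReal_nonneg.lt_of_ne' fun h ↦ by
    simp only [M, h, div_zero] at hru_eq; linarith
  have ha : ∫ x, err x ∂μ = ru * M := by rw [hru_eq]; field_simp
  have hbound := integral_mul_log_one_div_le_log_two_mul_add (g := err)
    (fun x ↦ by by_cases h : f x = fstar x <;> simp [err, h])
    (.of_integral_ne_zero (by rw [ha]; positivity)) (by rw [ha]; positivity)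
    (by rw [ha]; nlinarith) hq0 hq1 hqint hqrisk
  rw [← hru_eq, log_mul two_ne_zero hM.ne'] at hbound
  rw [le_div_iff₀ (neg_pos.2 (log_neg hru0 hru1))]
  change log M - γ ≤ _ at hent
  linarith

/-- Under the zero-one loss, the simplified bound
`r_dd(f;γ) ≤ (γ + log 2) / (−log r_exp(f;u))` holds whenever
`r_exp(f;u) ∈ (0,1)`. -/
theorem dd_risk_log_bound
    {X Y : Type*} [MeasurableSpace X] (μ : Measure X) [IsFiniteMeasure μ]
    (hμ : 0 < (μ univ).toReal)
    (f fstar : X → Y) (γ : ℝ) (hγ : 0 ≤ γ)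
    (ru : ℝ)
    (hru : ru = ∫ x, (1 / (μ univ).toReal) * (if f x = fstar x then (0:ℝ) else 1) ∂μ)
    (hru' : ru ∈ Ioo (0:ℝ) 1)
    (q : X → ℝ) (hq : Measurable q) (hq0 : ∀ x, 0 ≤ q x)
    (hq1 : ∫ x, q x ∂μ = 1)
    (hqint : Integrable (fun x => q x * log (1 / q x)) μ)
    (hqrisk : Integrable (fun x => q x * (if f x = fstar x then (0:ℝ) else 1)) μ)
    (hent : log (μ univ).toReal - γ ≤ ∫ x, q x * log (1 / q x) ∂μ) :
    (∫ x, q x * (if f x = fstar x then (0:ℝ) else 1) ∂μ)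
      ≤ (γ + log 2) / (-log ru) :=
  dd_risk_log_bound_general μ f fstar γ ru hru hru' q hq0 hq1 hqint hqrisk hent
end

section
/- Suppose the expected risk under the uniform distribution satisfies r_exp(f; u) < e^{−γ}. Then the distributionally diverse risk r_dd(f; γ) is strictly less than 1. Conversely, if log(vol(E)) ≥ H(u) − γ (equivalently r_exp(f; u) ≥ e^{−γ}), then r_dd(f; γ) = 1. -/
/-!
Bounding `q log (1/q)` pointwise by the tangent line `b q + e^{-1-b}` (Fenchel–Young for the
negative entropy), with `b` tuned separately on `E` and on `Eᶜ`, bounds the entropy of a density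
`q` by an affine function of its mass `t = ∫_E q`, whose value at `t = 1` is
`log vol(E) + e^{-s}` for an arbitrarily large parameter `s`. If `log vol(E)` lies below the
entropy threshold, this forces `t` to stay below a constant `c < 1`. Conversely, once `log vol(E)`
reaches the threshold, the uniform density on `E` is admissible and puts all of its mass on `E`.
-/

open MeasureTheory Real Set Filter

lemma mul_log_one_div_le_s10 (b : ℝ) {x : ℝ} (hx : 0 ≤ x) :
    x * log (1 / x) ≤ b * x + exp (-1 - b) := by
  rcases hx.eq_or_lt with rfl | hx
  · simp only [div_zero, log_zero, mul_zero, zero_add]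
    positivity
  have hlog := log_le_sub_one_of_pos (div_pos (exp_pos (-1 - b)) hx)
  rw [log_div (exp_ne_zero _) hx.ne', log_exp] at hlog
  rw [one_div, log_inv]
  have hcancel : x * (exp (-1 - b) / x) = exp (-1 - b) := mul_div_cancel₀ _ hx.ne'
  nlinarith [mul_le_mul_of_nonneg_left hlog hx.le]

section Entropy

variable {X : Type*} [MeasurableSpace X] {μ : Measure X} {q : X → ℝ}

lemma setIntegral_mul_log_one_div_le (hq0 : ∀ x, 0 ≤ q x) (hqi : Integrable q μ)
    (hqe : Integrable (fun x => q x * log (1 / q x)) μ) {A : Set X} (hA : 0 < μ.real A)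
    (s : ℝ) :
    ∫ x in A, q x * log (1 / q x) ∂μ ≤
      (log (μ.real A) + s - 1) * ∫ x in A, q x ∂μ + exp (-s) := by
  set b := log (μ.real A) + s - 1
  have hconst : IntegrableOn (fun _ => exp (-1 - b)) A μ :=
    integrableOn_const (ENNReal.toReal_pos_iff.mp hA).2.ne
  -- `b` is chosen so that the constant term integrates to `e^{-s}`
  have hexp : exp (-1 - b) * μ.real A = exp (-s) := by
    rw [show -1 - b = -s + -log (μ.real A) by ring, exp_add, exp_neg (log _), exp_log hA,
      inv_mul_cancel_right₀ hA.ne']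
  calc ∫ x in A, q x * log (1 / q x) ∂μ
      ≤ ∫ x in A, (b * q x + exp (-1 - b)) ∂μ :=
        setIntegral_mono hqe.integrableOn ((hqi.integrableOn.const_mul b).add hconst)
          fun x => mul_log_one_div_le_s10 b (hq0 x)
    _ = b * ∫ x in A, q x ∂μ + exp (-s) := by
        rw [integral_add (hqi.integrableOn.const_mul b) hconst, integral_const_mul,
          setIntegral_const, smul_eq_mul, mul_comm (μ.real A), hexp]

lemma integral_mul_log_one_div_le_of_setIntegral {E : Set X} (hE : MeasurableSet E)
    (hvE : 0 < μ.real E) (hvEc : 0 < μ.real Eᶜ) (hq0 : ∀ x, 0 ≤ q x)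
    (hq1 : ∫ x, q x ∂μ = 1)
    (hqe : Integrable (fun x => q x * log (1 / q x)) μ) (s : ℝ) :
    ∫ x, q x * log (1 / q x) ∂μ ≤
      (log (μ.real E) - log (μ.real Eᶜ) - s) * ∫ x in E, q x ∂μ
        + log (μ.real Eᶜ) + s + exp (-s) := by
  have hqi : Integrable q μ := .of_integral_ne_zero (by rw [hq1]; exact one_ne_zero)
  have hmass : ∫ x in Eᶜ, q x ∂μ = 1 - ∫ x in E, q x ∂μ := by
    rw [← hq1, ← integral_add_compl hE hqi, add_sub_cancel_left]
  have hin := setIntegral_mul_log_one_div_le hq0 hqi hqe hvE 0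
  have hout := setIntegral_mul_log_one_div_le hq0 hqi hqe hvEc s
  rw [← integral_add_compl hE hqe]
  rw [hmass] at hout
  simp only [neg_zero, exp_zero, add_zero] at hin
  linarith

lemma exists_setIntegral_le_of_log_measureReal_lt {E : Set X} (hE : MeasurableSet E)
    (hvE : 0 < μ.real E) (hvEc : 0 < μ.real Eᶜ) {L : ℝ} (hL : log (μ.real E) < L) :
    ∃ c < 1, ∀ q : X → ℝ, (∀ x, 0 ≤ q x) → ∫ x, q x ∂μ = 1 →
      Integrable (fun x => q x * log (1 / q x)) μ → L ≤ ∫ x, q x * log (1 / q x) ∂μ →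
        ∫ x in E, q x ∂μ ≤ c := by
  set a := log (μ.real E)
  set d := log (μ.real Eᶜ)
  -- `a - d < s` makes the affine entropy bound strictly decreasing in the mass on `E`, and
  -- `exp (-s) < L - a` puts its value at mass `1` below `L`
  obtain ⟨s, hs, hexp⟩ : ∃ s, a - d < s ∧ exp (-s) < L - a :=
    ((eventually_gt_atTop (a - d)).and
      (tendsto_exp_neg_atTop_nhds_zero.eventually (gt_mem_nhds (sub_pos.mpr hL)))).exists
  refine ⟨(d + s + exp (-s) - L) / (d + s - a), ?_, fun q hq0 hq1 hqe hH => ?_⟩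
  · rw [div_lt_one (by linarith)]
    linarith
  · rw [le_div_iff₀ (by linarith)]
    linarith [integral_mul_log_one_div_le_of_setIntegral hE hvE hvEc hq0 hq1 hqe s]

end Entropy

section UniformDensity

variable {X : Type*} [MeasurableSpace X] (μ : Measure X) (E : Set X)

noncomputable def uniformDensity : X → ℝ := E.indicator fun _ => (μ.real E)⁻¹

lemma uniformDensity_nonneg (x : X) : 0 ≤ uniformDensity μ E x :=
  indicator_nonneg (fun _ _ => inv_nonneg.mpr measureReal_nonneg) x

variable {μ E}

lemma measurable_uniformDensity (hE : MeasurableSet E) : Measurable (uniformDensity μ E) :=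
  measurable_const.indicator hE

lemma mul_log_one_div_uniformDensity :
    (fun x => uniformDensity μ E x * log (1 / uniformDensity μ E x)) =
      E.indicator fun _ => (μ.real E)⁻¹ * log (μ.real E) := by
  ext x
  by_cases hx : x ∈ E <;> simp [uniformDensity, hx]

lemma integrable_mul_log_one_div_uniformDensity (hE : MeasurableSet E) (hvE : μ E ≠ ⊤) :
    Integrable (fun x => uniformDensity μ E x * log (1 / uniformDensity μ E x)) μ := by
  rw [mul_log_one_div_uniformDensity]
  exact (integrableOn_const hvE).integrable_indicator hE

lemma integral_uniformDensity (hE : MeasurableSet E) (hvE : 0 < μ.real E) :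
    ∫ x, uniformDensity μ E x ∂μ = 1 := by
  rw [uniformDensity, integral_indicator_const _ hE, smul_eq_mul, mul_inv_cancel₀ hvE.ne']

lemma setIntegral_uniformDensity_self (hE : MeasurableSet E) (hvE : 0 < μ.real E) :
    ∫ x in E, uniformDensity μ E x ∂μ = 1 := by
  rw [uniformDensity, setIntegral_indicator hE, inter_self, setIntegral_const, smul_eq_mul,
    mul_inv_cancel₀ hvE.ne']

lemma integral_mul_log_one_div_uniformDensity (hE : MeasurableSet E)
    (hvE : 0 < μ.real E) :
    ∫ x, uniformDensity μ E x * log (1 / uniformDensity μ E x) ∂μ = log (μ.real E) := by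
  rw [mul_log_one_div_uniformDensity, integral_indicator_const _ hE, smul_eq_mul,
    mul_inv_cancel_left₀ hvE.ne']

end UniformDensity

theorem dd_risk_lt_one_iff_small_uniform_risk_general
    {X : Type*} [MeasurableSpace X] (μ : Measure X)
    (E : Set X) (hE : MeasurableSet E)
    (hvE : 0 < (μ E).toReal) (hvEc : 0 < (μ Eᶜ).toReal)
    (γ : ℝ) :
    ((μ E).toReal / (μ univ).toReal < Real.exp (-γ) →
      ∃ c < (1:ℝ), ∀ q : X → ℝ, Measurable q → (∀ x, 0 ≤ q x) →
        (∫ x, q x ∂μ) = 1 →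
        Integrable (fun x => q x * log (1 / q x)) μ →
        log (μ univ).toReal - γ ≤ (∫ x, q x * log (1 / q x) ∂μ) →
        (∫ x in E, q x ∂μ) ≤ c) ∧
    (log (μ univ).toReal - γ ≤ log (μ E).toReal →
      ∃ q : X → ℝ, Measurable q ∧ (∀ x, 0 ≤ q x) ∧
        (∫ x, q x ∂μ) = 1 ∧
        Integrable (fun x => q x * log (1 / q x)) μ ∧
        log (μ univ).toReal - γ ≤ (∫ x, q x * log (1 / q x) ∂μ) ∧
        (∫ x in E, q x ∂μ) = 1) := by
  have hEfin : μ E ≠ ⊤ := (ENNReal.toReal_pos_iff.mp hvE).2.ne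
  have hfin : μ univ ≠ ⊤ := by
    rw [← union_compl_self E]
    exact measure_union_ne_top hEfin (ENNReal.toReal_pos_iff.mp hvEc).2.ne
  have hvX : 0 < (μ univ).toReal := hvE.trans_le (measureReal_mono (subset_univ E) hfin)
  refine ⟨fun hu => ?_, fun hle => ?_⟩
  · have hL : log (μ.real E) < log (μ univ).toReal - γ := by
      have := log_lt_log hvE ((div_lt_iff₀ hvX).mp hu)
      rwa [log_mul (exp_ne_zero _) hvX.ne', log_exp, neg_add_eq_sub] at this
    obtain ⟨c, hc, hbound⟩ := exists_setIntegral_le_of_log_measureReal_lt hE hvE hvEc hL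
    exact ⟨c, hc, fun q _ => hbound q⟩
  · exact ⟨uniformDensity μ E, measurable_uniformDensity hE, uniformDensity_nonneg μ E,
      integral_uniformDensity hE hvE,
      integrable_mul_log_one_div_uniformDensity hE hEfin,
      (integral_mul_log_one_div_uniformDensity hE hvE).symm ▸ hle,
      setIntegral_uniformDensity_self hE hvE⟩

/-- If the uniform risk `vol(E)/vol(X)` is below `e^{−γ}`, the distributionally
diverse risk (sup of `q(E)` over densities with entropy `≥ H(u) − γ`) is
strictly below 1; conversely if `log vol(E) ≥ H(u) − γ` it equals 1. -/
theorem dd_risk_lt_one_iff_small_uniform_risk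
    {X : Type*} [MeasurableSpace X] (μ : Measure X) [IsFiniteMeasure μ]
    (E : Set X) (hE : MeasurableSet E)
    (hvE : 0 < (μ E).toReal) (hvEc : 0 < (μ Eᶜ).toReal)
    (γ : ℝ) (hγ : 0 ≤ γ) :
    ((μ E).toReal / (μ univ).toReal < Real.exp (-γ) →
      ∃ c < (1:ℝ), ∀ q : X → ℝ, Measurable q → (∀ x, 0 ≤ q x) →
        (∫ x, q x ∂μ) = 1 →
        Integrable (fun x => q x * log (1 / q x)) μ →
        log (μ univ).toReal - γ ≤ (∫ x, q x * log (1 / q x) ∂μ) →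
        (∫ x in E, q x ∂μ) ≤ c) ∧
    (log (μ univ).toReal - γ ≤ log (μ E).toReal →
      ∃ q : X → ℝ, Measurable q ∧ (∀ x, 0 ≤ q x) ∧
        (∫ x, q x ∂μ) = 1 ∧
        Integrable (fun x => q x * log (1 / q x)) μ ∧
        log (μ univ).toReal - γ ≤ (∫ x, q x * log (1 / q x) ∂μ) ∧
        (∫ x in E, q x ∂μ) = 1) :=
  dd_risk_lt_one_iff_small_uniform_risk_general μ E hE hvE hvEc γ
end
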